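/- Let f(θ,S) be a measurable function and let P_S be a data-dependent probability distribution over parameters Θ depending on the dataset S ∼ D^s. If the β-approximate max-information of the map S ↦ P_S is at most k, then ξ(f, P_S) := ∫∫ exp(f(θ,S)) P_S(dθ) D^s(dS) ≤ e^k · ξ_bd(f) + β · exp(‖f‖∞), where ξ_bd(f) := sup over data-independent distributions P' of ∫∫ exp(f(θ,S)) P'(dθ) D^s(dS). -/

import Mathlib

open MeasureTheory ENNReal ProbabilityTheory

/-! By the layer-cake formula, `∫ exp f` is the integral over levels `t ∈ (0, e^M)` of the mass
of the superlevel set `{exp f > t}` (above `e^M` the set is empty). Applying the max-information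
inequality to each superlevel set bounds the integrand by `e^k` times its mass under the product
measure `D ⊗ Q` plus `β`; the first part integrates back to the exponential moment under the
data-independent prior `Q = 𝔼_S P_S`, the second part contributes `β e^M`. -/

theorem lintegral_ofReal_le_of_measure_le {α : Type*} [MeasurableSpace α] {μ ν : Measure α}
    {c b : ℝ≥0∞} (h : ∀ E, MeasurableSet E → μ E ≤ c * ν E + b)
    {g : α → ℝ} (hg : Measurable g) (hg0 : 0 ≤ g) {C : ℝ} (hgC : ∀ a, g a ≤ C) :
    ∫⁻ a, ENNReal.ofReal (g a) ∂μ ≤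
      c * ∫⁻ a, ENNReal.ofReal (g a) ∂ν + b * ENNReal.ofReal C := by
  have hlevel : ∀ t,
      μ {a | t < g a} ≤ c * ν {a | t < g a} + (Set.Iio C).indicator (fun _ => b) t := by
    intro t
    by_cases ht : t < C
    · rw [Set.indicator_of_mem (Set.mem_Iio.mpr ht)]
      exact h _ (hg measurableSet_Ioi)
    · have hempty : {a | t < g a} = ∅ :=
        Set.eq_empty_of_forall_notMem fun a ha => ht (ha.trans_le (hgC a))
      simp [hempty]
  have hν_meas : Measurable fun t : ℝ => ν {a | t < g a} :=
    Antitone.measurable fun s t hst => measure_mono fun a ha => hst.trans_lt ha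
  rw [lintegral_eq_lintegral_meas_lt μ (.of_forall hg0) hg.aemeasurable,
    lintegral_eq_lintegral_meas_lt ν (.of_forall hg0) hg.aemeasurable]
  calc ∫⁻ t in Set.Ioi 0, μ {a | t < g a}
      ≤ ∫⁻ t in Set.Ioi 0, (c * ν {a | t < g a} + (Set.Iio C).indicator (fun _ => b) t) :=
        lintegral_mono hlevel
    _ = c * (∫⁻ t in Set.Ioi 0, ν {a | t < g a}) + b * ENNReal.ofReal C := by
        rw [lintegral_add_left (hν_meas.const_mul c), lintegral_const_mul c hν_meas,
          lintegral_indicator_const measurableSet_Iio, Measure.restrict_apply measurableSet_Iio,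
          Set.Iio_inter_Ioi, Real.volume_Ioo, sub_zero]

theorem lintegral_prod_le_iSup_isProbabilityMeasure {Ω Θ : Type*} [MeasurableSpace Ω]
    [MeasurableSpace Θ] (D : Measure Ω) [SFinite D] (Q : Measure Θ) [IsProbabilityMeasure Q]
    {F : Ω → Θ → ℝ≥0∞} (hF : Measurable (Function.uncurry F)) :
    ∫⁻ z, F z.1 z.2 ∂(D.prod Q) ≤
      ⨆ P' : {m : Measure Θ // IsProbabilityMeasure m}, ∫⁻ ω, ∫⁻ θ, F ω θ ∂P'.1 ∂D :=
  (lintegral_prod _ hF.aemeasurable).trans_le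
    (le_iSup (fun P' : {m : Measure Θ // IsProbabilityMeasure m} =>
      ∫⁻ ω, ∫⁻ θ, F ω θ ∂P'.1 ∂D) ⟨Q, ‹_›⟩)

theorem xi_bound_of_max_information_general
    {Ω Θ : Type*} [MeasurableSpace Ω] [MeasurableSpace Θ]
    (D : Measure Ω) [IsProbabilityMeasure D]
    (P : Kernel Ω Θ) [IsMarkovKernel P]
    (k : ℝ) (b : ℝ≥0∞)
    (hmax : ∀ E : Set (Ω × Θ), MeasurableSet E →
      (D.compProd P) E ≤
        ENNReal.ofReal (Real.exp k) * (D.prod (D.bind (fun ω => P ω))) E + b)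
    (f : Ω → Θ → ℝ) (hf : Measurable (Function.uncurry f))
    (M : ℝ) (hM : ∀ ω θ, |f ω θ| ≤ M) :
    ∫⁻ z, ENNReal.ofReal (Real.exp (f z.1 z.2)) ∂(D.compProd P) ≤
      ENNReal.ofReal (Real.exp k) *
        (⨆ P' : {m : Measure Θ // IsProbabilityMeasure m},
          ∫⁻ ω, ∫⁻ θ, ENNReal.ofReal (Real.exp (f ω θ)) ∂P'.1 ∂D) +
      b * ENNReal.ofReal (Real.exp M) := by
  have hexp_meas : Measurable fun z : Ω × Θ => Real.exp (f z.1 z.2) :=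
    Real.measurable_exp.comp hf
  calc ∫⁻ z, ENNReal.ofReal (Real.exp (f z.1 z.2)) ∂(D.compProd P)
      ≤ ENNReal.ofReal (Real.exp k) *
          ∫⁻ z, ENNReal.ofReal (Real.exp (f z.1 z.2)) ∂(D.prod (D.bind (fun ω => P ω))) +
        b * ENNReal.ofReal (Real.exp M) :=
        lintegral_ofReal_le_of_measure_le hmax hexp_meas (fun z => (Real.exp_pos _).le)
          fun z => Real.exp_le_exp.mpr (abs_le.mp (hM z.1 z.2)).2
    _ ≤ _ := by
        gcongr
        exact lintegral_prod_le_iSup_isProbabilityMeasure D _ hexp_meas.ennreal_ofReal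

/-- Bound on the exponential moment `ξ(f, P_S)` for a data-dependent prior `P_S` (given by a
Markov kernel `P` from datasets to parameters) whose `β`-approximate max-information is at most
`k`:  `ξ(f, P_S) ≤ e^k · ξ_bd(f) + β · exp ‖f‖∞`, where `ξ_bd(f)` is the supremum of the
exponential moment over data-independent priors `P'`. -/
theorem xi_bound_of_max_information
    {Ω Θ : Type*} [MeasurableSpace Ω] [MeasurableSpace Θ]
    (D : Measure Ω) [IsProbabilityMeasure D]
    (P : Kernel Ω Θ) [IsMarkovKernel P]
    (k : ℝ) (b : ℝ≥0∞) (hb0 : 0 < b) (hb1 : b < 1)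
    (hmax : ∀ E : Set (Ω × Θ), MeasurableSet E →
      (D.compProd P) E ≤
        ENNReal.ofReal (Real.exp k) * (D.prod (D.bind (fun ω => P ω))) E + b)
    (f : Ω → Θ → ℝ) (hf : Measurable (Function.uncurry f))
    (M : ℝ) (hM : ∀ ω θ, |f ω θ| ≤ M) :
    ∫⁻ z, ENNReal.ofReal (Real.exp (f z.1 z.2)) ∂(D.compProd P) ≤
      ENNReal.ofReal (Real.exp k) *
        (⨆ P' : {m : Measure Θ // IsProbabilityMeasure m},
          ∫⁻ ω, ∫⁻ θ, ENNReal.ofReal (Real.exp (f ω θ)) ∂P'.1 ∂D) +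
      b * ENNReal.ofReal (Real.exp M) :=
  xi_bound_of_max_information_general D P k b hmax f hf M hM
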